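/- arXiv:1802.04613 — 4 statements merged into one kernel-verified Lean document; each statement's English description precedes it below -/
import Mathlib

section
/- Let V be a finite type and let H₀ ⊆ H₁ ⊆ H₂ ⊆ ⋯ be a transitive–fraternal augmentation sequence of digraphs on V. Let u ∈ V, let S = {v ∈ V : (v,u) is an edge of H₀} be the set of in-neighbors of u in H₀, and let m = |S|. Then there exists a list s₁, s₂, …, s_m enumerating the elements of S without repetition such that for all indices i < j, (s_i, s_j) is an edge of H_m. -/
/-!
Since `S` is the in-neighbourhood of `u` in `H 0`, fraternity makes any two distinct vertices
of `S` adjacent in `H 1`, so `S` spans a tournament in `H 1`. Inserting the vertices one by one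
in front of their first out-neighbour (insertion sort) yields a Hamiltonian path `s₁ → ⋯ → s_m`
of that tournament. Along this path, transitivity upgrades an edge `(s_i, s_j)` of `H (j - i)`
and the edge `(s_j, s_{j+1})` to an edge `(s_i, s_{j+1})` of `H (j + 1 - i)`; the path has no
repeated vertex, so the distinctness side condition always holds. Finally `j - i ≤ m`.
-/

namespace List

variable {α : Type*}

theorem IsChain.orderedInsert (r : α → α → Prop) [DecidableRel r] {a : α} {l : List α}
    (hl : l.IsChain r) (hcomp : ∀ x ∈ l, r a x ∨ r x a) : (l.orderedInsert r a).IsChain r := by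
  induction l with
  | nil => exact isChain_singleton a
  | cons b t ih =>
    have ht := ih hl.tail fun x hx => hcomp x (mem_cons_of_mem b hx)
    by_cases hab : r a b
    · rw [orderedInsert_cons_of_le r t hab]
      exact hl.cons (by simpa using hab)
    · have hba : r b a := (hcomp b mem_cons_self).resolve_left hab
      rw [orderedInsert_of_not_le r t hab]
      refine ht.cons ?_
      cases t with
      | nil => simpa using hba
      | cons c t =>
        rw [orderedInsert_cons]
        split_ifs <;> simp [hba, (isChain_cons_cons.1 hl).1]

/-- Rédei's theorem: every tournament has a Hamiltonian path. -/
theorem isChain_insertionSort_of_pairwise_total (r : α → α → Prop) [DecidableRel r]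
    {l : List α} (hl : l.Pairwise fun x y => r x y ∨ r y x) : (l.insertionSort r).IsChain r := by
  induction l with
  | nil => exact isChain_nil
  | cons a t ih =>
    rw [pairwise_cons] at hl
    exact (ih hl.2).orderedInsert r fun x hx => hl.1 x ((mem_insertionSort r).1 hx)

theorem rel_getElem_of_isChain {H : ℕ → α → α → Prop} (hH : Monotone H)
    (htrans : ∀ i x y z, H i x y → H i y z → x ≠ z → H (i + 1) x z)
    {l : List α} (hnd : l.Nodup) (hl : l.IsChain (H 1)) {i j : ℕ} (hij : i < j)
    (hj : j < l.length) : H (j - i) l[i] l[j] := by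
  induction j with
  | zero => omega
  | succ j ih =>
    have hstep : H 1 l[j] l[j + 1] := isChain_iff_getElem.1 hl j hj
    rcases Nat.lt_succ_iff_lt_or_eq.1 hij with hij | rfl
    · have hne : l[i] ≠ l[j + 1] := fun h => by
        have := hnd.getElem_inj_iff.1 h
        omega
      have := htrans _ _ _ _ (ih hij (by omega)) (hH (by omega) _ _ hstep) hne
      rwa [← Nat.sub_add_comm hij.le] at this
    · simpa using hstep

end List

theorem stmt_2_general {V : Type*} [Fintype V] (H : ℕ → V → V → Prop)
    (hmono : ∀ i x y, H i x y → H (i + 1) x y)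
    (htrans : ∀ i x y z, H i x y → H i y z → x ≠ z → H (i + 1) x z)
    (hfrat : ∀ i x y z, x ≠ y → H i x z → H i y z → H (i + 1) x y ∨ H (i + 1) y x)
    (u : V) :
    ∃ l : List V, l.Nodup ∧ (∀ v, v ∈ l ↔ H 0 v u) ∧
      ∀ i j : Fin l.length, (i : ℕ) < (j : ℕ) → H l.length (l.get i) (l.get j) := by
  classical
  have hH : Monotone H := monotone_nat_of_le_succ hmono
  set S := (Finset.univ.filter fun v => H 0 v u).toList
  have hS : S.Pairwise fun x y => H 1 x y ∨ H 1 y x :=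
    (Finset.nodup_toList _).pairwise_of_forall_ne fun x hx y hy hxy =>
      hfrat 0 x y u hxy (by simpa [S] using hx) (by simpa [S] using hy)
  have hperm : (S.insertionSort (H 1)).Perm S := List.perm_insertionSort _ _
  have hnd : (S.insertionSort (H 1)).Nodup := hperm.nodup_iff.2 (Finset.nodup_toList _)
  refine ⟨_, hnd, fun v => by simp [hperm.mem_iff, S], fun i j hij => ?_⟩
  exact hH (by omega) _ _
    (List.rel_getElem_of_isChain hH htrans hnd (List.isChain_insertionSort_of_pairwise_total _ hS)
      hij j.isLt)

/-- Lemma 3.2 of the paper: in a transitive–fraternal augmentation sequence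
`H 0 ⊆ H 1 ⊆ ⋯` of digraphs on a finite vertex set, the set `S` of in-neighbors
of a vertex `u` in `H 0` can be enumerated without repetition as `s₁, …, s_m`
(with `m = |S|`) so that `(s_i, s_j)` is an edge of `H m` whenever `i < j`. -/
theorem stmt_2 {V : Type*} [Fintype V] (H : ℕ → V → V → Prop)
    (hirr : ∀ i x, ¬ H i x x)
    (hmono : ∀ i x y, H i x y → H (i + 1) x y)
    (htrans : ∀ i x y z, H i x y → H i y z → x ≠ z → H (i + 1) x z)
    (hfrat : ∀ i x y z, x ≠ y → H i x z → H i y z → H (i + 1) x y ∨ H (i + 1) y x)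
    (u : V) :
    ∃ l : List V, l.Nodup ∧ (∀ v, v ∈ l ↔ H 0 v u) ∧
      ∀ i j : Fin l.length, (i : ℕ) < (j : ℕ) → H l.length (l.get i) (l.get j) :=
  stmt_2_general H hmono htrans hfrat u
end

section
/- Let V be a type and let H₀ ⊆ H₁ ⊆ H₂ ⊆ ⋯ be a sequence of digraphs on V such that for every i ≥ 0 and all vertices x, y, z: if (x,y) and (y,z) are edges of H_i and x ≠ z, then (x,z) is an edge of H_{i+1}. Then for every i ≥ 0 and all distinct vertices u, v: if there is a directed walk in H₀ from u to v of length ℓ with 1 ≤ ℓ ≤ 2^i, then (u,v) is an edge of H_i. -/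
/-!
Pass to the reflexive closures `ReflGen (H i)`. Two steps of `ReflGen (H i)` give one step of
`ReflGen (H (i + 1))`: if the endpoints agree this is reflexivity, otherwise it is the augmentation
rule (or monotonicity, when one of the two steps is trivial). Hence, by induction on `i`, splitting a
walk of length `ℓ ≤ 2 ^ (i + 1)` after `min ℓ (2 ^ i)` steps, the endpoints of a walk of length at
most `2 ^ i` in `H 0` are related by `ReflGen (H i)`, which is an edge when they are distinct.
-/

open Relation

section TransitiveAugmentation

variable {V : Type*} {H : ℕ → V → V → Prop}

theorem reflGen_succ_of_reflGen_of_reflGen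
    (hmono : ∀ i x y, H i x y → H (i + 1) x y)
    (htrans : ∀ i x y z, H i x y → H i y z → x ≠ z → H (i + 1) x z)
    {i : ℕ} {x y z : V} (hxy : ReflGen (H i) x y) (hyz : ReflGen (H i) y z) :
    ReflGen (H (i + 1)) x z := by
  by_cases hxz : x = z
  · exact hxz ▸ ReflGen.refl
  refine ReflGen.single ?_
  cases hxy with
  | refl => cases hyz with
    | refl => exact absurd rfl hxz
    | single h => exact hmono _ _ _ h
  | single hxy => cases hyz with
    | refl => exact hmono _ _ _ hxy
    | single hyz => exact htrans _ _ _ _ hxy hyz hxz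

theorem reflGen_of_walk_of_le_two_pow
    (hmono : ∀ i x y, H i x y → H (i + 1) x y)
    (htrans : ∀ i x y z, H i x y → H i y z → x ≠ z → H (i + 1) x z)
    (i ℓ : ℕ) (hℓ : ℓ ≤ 2 ^ i) (w : ℕ → V) (hstep : ∀ j < ℓ, H 0 (w j) (w (j + 1))) :
    ReflGen (H i) (w 0) (w ℓ) := by
  induction i generalizing ℓ w with
  | zero =>
    obtain rfl | rfl : ℓ = 0 ∨ ℓ = 1 := by omega
    exacts [ReflGen.refl, ReflGen.single (hstep 0 zero_lt_one)]
  | succ i ih =>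
    set m := min ℓ (2 ^ i)
    have hfirst : ReflGen (H i) (w 0) (w m) :=
      ih m (min_le_right _ _) w fun j hj => hstep j (by omega)
    have hsecond : ReflGen (H i) (w (m + 0)) (w (m + (ℓ - m))) :=
      ih (ℓ - m) (by rw [pow_succ] at hℓ; omega) (fun j => w (m + j))
        fun j hj => hstep (m + j) (by omega)
    rw [Nat.add_zero, Nat.add_sub_cancel' (min_le_left _ _)] at hsecond
    exact reflGen_succ_of_reflGen_of_reflGen hmono htrans hfirst hsecond

end TransitiveAugmentation

theorem stmt_3_general {V : Type*} (H : ℕ → V → V → Prop)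
    (hmono : ∀ i x y, H i x y → H (i + 1) x y)
    (htrans : ∀ i x y z, H i x y → H i y z → x ≠ z → H (i + 1) x z)
    (i : ℕ) (u v : V) (huv : u ≠ v)
    (ℓ : ℕ) (hℓ2 : ℓ ≤ 2 ^ i)
    (w : ℕ → V) (hw0 : w 0 = u) (hwℓ : w ℓ = v)
    (hstep : ∀ j < ℓ, H 0 (w j) (w (j + 1))) :
    H i u v := by
  have hwalk := reflGen_of_walk_of_le_two_pow hmono htrans i ℓ hℓ2 w hstep
  rw [hw0, hwℓ] at hwalk
  cases hwalk with
  | refl => exact absurd rfl huv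
  | single h => exact h

/-- Under iterated transitive augmentation, a directed walk of length `ℓ` with
`1 ≤ ℓ ≤ 2^i` in `H 0` between distinct vertices becomes a single edge of `H i`. -/
theorem stmt_3 {V : Type*} (H : ℕ → V → V → Prop)
    (hirr : ∀ i x, ¬ H i x x)
    (hmono : ∀ i x y, H i x y → H (i + 1) x y)
    (htrans : ∀ i x y z, H i x y → H i y z → x ≠ z → H (i + 1) x z)
    (i : ℕ) (u v : V) (huv : u ≠ v)
    (ℓ : ℕ) (hℓ1 : 1 ≤ ℓ) (hℓ2 : ℓ ≤ 2 ^ i)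
    (w : ℕ → V) (hw0 : w 0 = u) (hwℓ : w ℓ = v)
    (hstep : ∀ j < ℓ, H 0 (w j) (w (j + 1))) :
    H i u v :=
  stmt_3_general H hmono htrans i u v huv ℓ hℓ2 w hw0 hwℓ hstep
end

section
/- Let G be a finite simple graph of maximum degree at most d, where d ≥ 2, with vertex set V. Let H₀ be a digraph on V every edge of which is an orientation of an edge of G, and let H₀ ⊆ H₁ ⊆ H₂ ⊆ ⋯ be a strict transitive–fraternal augmentation sequence of digraphs on V. Then for every i ≥ 0 and every vertex v, the in-degree of v in H_i, that is the number of vertices u with (u,v) an edge of H_i, is at most d^{2^i}. -/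
/-!
Forget orientations and bound the full degree of the underlying graph of `H i`, which dominates
the in-degree. Every edge of `H (i + 1)` joins vertices at distance at most two in the underlying
graph of `H i`, and a graph of maximum degree `D` has at most `D * D` vertices at distance one or
two from a given vertex: each neighbour `z` of `v` contributes itself and its neighbours other
than `v`, i.e. at most `D` vertices. Hence the degree bound squares at each step.
-/

namespace SimpleGraph

variable {V : Type*} [Fintype V] [DecidableEq V]

theorem degree_le_sq_of_adj_imp_adj_or_exists_adj_adj {G G' : SimpleGraph V}
    [DecidableRel G.Adj] [DecidableRel G'.Adj] {D : ℕ} (hG : ∀ w, G.degree w ≤ D)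
    (hG' : ∀ u v, G'.Adj u v → G.Adj u v ∨ ∃ z, G.Adj u z ∧ G.Adj z v) (v : V) :
    G'.degree v ≤ D ^ 2 := by
  have hsub : G'.neighborFinset v ⊆
      (G.neighborFinset v).biUnion fun z => (insert z (G.neighborFinset z)).erase v := by
    intro u hu
    rw [mem_neighborFinset] at hu
    simp only [Finset.mem_biUnion, Finset.mem_erase, Finset.mem_insert, mem_neighborFinset]
    rcases hG' v u hu with hvu | ⟨z, hvz, hzu⟩
    · exact ⟨u, hvu, hu.ne', Or.inl rfl⟩
    · exact ⟨z, hvz, hu.ne', Or.inr hzu⟩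
  have hpiece : ∀ z ∈ G.neighborFinset v,
      ((insert z (G.neighborFinset z)).erase v).card ≤ D := by
    intro z hz
    rw [mem_neighborFinset] at hz
    have hv : v ∈ insert z (G.neighborFinset z) :=
      Finset.mem_insert_of_mem ((mem_neighborFinset _ _ _).2 hz.symm)
    have herase := Finset.card_erase_add_one hv
    have hinsert := Finset.card_insert_le z (G.neighborFinset z)
    rw [card_neighborFinset_eq_degree] at hinsert
    have := hG z
    omega
  calc G'.degree v = (G'.neighborFinset v).card := (card_neighborFinset_eq_degree _ _).symm
    _ ≤ _ := Finset.card_le_card hsub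
    _ ≤ (G.neighborFinset v).card * D := Finset.card_biUnion_le_card_mul _ _ _ hpiece
    _ ≤ D ^ 2 := by rw [card_neighborFinset_eq_degree, sq]; exact Nat.mul_le_mul_right _ (hG v)

end SimpleGraph

def IsTransFraternalAugmentation {V : Type*} (R S : V → V → Prop) : Prop :=
  ∀ x y, S x y → R x y ∨ (∃ z, R x z ∧ R z y) ∨ (∃ z, R x z ∧ R y z)

open SimpleGraph

theorem IsTransFraternalAugmentation.adj_or_exists_adj_adj {V : Type*} {R S : V → V → Prop}
    (hR : ∀ x, ¬ R x x) (hRS : IsTransFraternalAugmentation R S) {u v : V}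
    (huv : (fromRel S).Adj u v) :
    (fromRel R).Adj u v ∨ ∃ z, (fromRel R).Adj u z ∧ (fromRel R).Adj z v := by
  have adj_of_rel : ∀ {x y}, R x y → (fromRel R).Adj x y := fun {x y} h =>
    (fromRel_adj _ _ _).2 ⟨fun hxy => hR x (hxy ▸ h), Or.inl h⟩
  obtain ⟨-, h | h⟩ := (fromRel_adj _ _ _).1 huv
  · rcases hRS u v h with h | ⟨z, huz, hzv⟩ | ⟨z, huz, hvz⟩
    · exact Or.inl (adj_of_rel h)
    · exact Or.inr ⟨z, adj_of_rel huz, adj_of_rel hzv⟩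
    · exact Or.inr ⟨z, adj_of_rel huz, (adj_of_rel hvz).symm⟩
  · rcases hRS v u h with h | ⟨z, hvz, hzu⟩ | ⟨z, hvz, huz⟩
    · exact Or.inl (adj_of_rel h).symm
    · exact Or.inr ⟨z, (adj_of_rel hzu).symm, (adj_of_rel hvz).symm⟩
    · exact Or.inr ⟨z, adj_of_rel huz, (adj_of_rel hvz).symm⟩

theorem stmt_6_general {V : Type*} [Fintype V] (G : SimpleGraph V) [DecidableRel G.Adj]
    (d : ℕ) (hdeg : ∀ w, G.degree w ≤ d)
    (H : ℕ → V → V → Prop)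
    (hirr : ∀ i x, ¬ H i x x)
    (hH0 : ∀ x y, H 0 x y → G.Adj x y)
    (hstrict : ∀ i x y, H (i + 1) x y →
      H i x y ∨ (∃ z, H i x z ∧ H i z y) ∨ (∃ z, H i x z ∧ H i y z))
    (i : ℕ) (v : V) :
    {u | H i u v}.ncard ≤ d ^ (2 ^ i) := by
  classical
  have hdeg_fromRel : ∀ j w, (fromRel (H j)).degree w ≤ d ^ (2 ^ j) := by
    intro j
    induction j with
    | zero =>
      intro w
      have hle : fromRel (H 0) ≤ G := fun x y hxy => by
        obtain ⟨-, h | h⟩ := (fromRel_adj _ _ _).1 hxy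
        exacts [hH0 x y h, (hH0 y x h).symm]
      simpa using (degree_le_of_le hle).trans (hdeg w)
    | succ j ih =>
      intro w
      rw [pow_succ, pow_mul]
      exact degree_le_sq_of_adj_imp_adj_or_exists_adj_adj ih
        (fun _ _ => IsTransFraternalAugmentation.adj_or_exists_adj_adj (hirr j) (hstrict j)) w
  have hsub : {u | H i u v} ⊆ (fromRel (H i)).neighborSet v := fun u hu =>
    (fromRel_adj _ _ _).2 ⟨fun hvu => hirr i u (hvu ▸ hu), Or.inr hu⟩
  calc {u | H i u v}.ncard ≤ ((fromRel (H i)).neighborSet v).ncard := Set.ncard_le_ncard hsub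
    _ = (fromRel (H i)).degree v := by
      rw [Set.ncard_eq_toFinset_card', Set.toFinset_card, card_neighborSet_eq_degree]
    _ ≤ d ^ (2 ^ i) := hdeg_fromRel i v

/-- The class of graphs of maximum degree at most `d` has bounded expansion
witnessed by `Γ(i) = d^{2^i}`: in any strict transitive–fraternal augmentation
sequence starting from an orientation of (a subgraph of) `G`, every vertex of
the `i`-th augmentation has in-degree at most `d ^ (2 ^ i)`. -/
theorem stmt_6 {V : Type*} [Fintype V] (G : SimpleGraph V) [DecidableRel G.Adj]
    (d : ℕ) (hd : 2 ≤ d) (hdeg : ∀ w, G.degree w ≤ d)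
    (H : ℕ → V → V → Prop)
    (hirr : ∀ i x, ¬ H i x x)
    (hmono : ∀ i x y, H i x y → H (i + 1) x y)
    (hH0 : ∀ x y, H 0 x y → G.Adj x y)
    (hstrict : ∀ i x y, H (i + 1) x y →
      H i x y ∨ (∃ z, H i x z ∧ H i z y) ∨ (∃ z, H i x z ∧ H i y z))
    (i : ℕ) (v : V) :
    {u | H i u v}.ncard ≤ d ^ (2 ^ i) :=
  stmt_6_general G d hdeg H hirr hH0 hstrict i v
end

section
/- Let G be a finite simple graph that admits some digraph H₀ on its vertices orienting every edge of G (for every edge {u,v} of G, (u,v) or (v,u) is an edge of H₀; every edge of H₀ comes from an edge of G) in which every vertex has in-degree at most k. Then G admits a digraph H on its vertices in which every edge {u,v} of G receives exactly one of the orientations (u,v), (v,u), every edge of H comes from an edge of G, and every vertex has in-degree at most 2k. -/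
/-!
Keep the given orientation `H₀` and only repair the edges it directs both ways, keeping one
direction according to a fixed strict total order on the vertices. This removes in-edges and
never adds any, so every in-degree stays at most `k ≤ 2 * k`.
-/

namespace Relation

variable {V : Type*}

def breakTies (r R : V → V → Prop) (u v : V) : Prop :=
  R u v ∧ (R v u → r u v)

variable {r R : V → V → Prop}

theorem breakTies.rel {u v : V} (h : breakTies r R u v) : R u v :=
  h.1

theorem xor_breakTies [Std.Trichotomous r] [Std.Asymm r] {u v : V} (hR : R u v ∨ R v u)
    (hne : u ≠ v) : Xor (breakTies r R u v) (breakTies r R v u) := by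
  by_cases huv : R u v <;> by_cases hvu : R v u
  · rcases trichotomous_of r u v with hr | rfl | hr
    · exact Or.inl ⟨⟨huv, fun _ => hr⟩, fun h => asymm_of r hr (h.2 huv)⟩
    · exact absurd rfl hne
    · exact Or.inr ⟨⟨hvu, fun _ => hr⟩, fun h => asymm_of r hr (h.2 hvu)⟩
  · exact Or.inl ⟨⟨huv, fun h => absurd h hvu⟩, fun h => hvu h.1⟩
  · exact Or.inr ⟨⟨hvu, fun h => absurd h huv⟩, fun h => huv h.1⟩
  · exact (hR.elim huv hvu).elim

theorem ncard_breakTies_le [Finite V] (v : V) :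
    {u | breakTies r R u v}.ncard ≤ {u | R u v}.ncard :=
  Set.ncard_le_ncard fun _ => breakTies.rel

end Relation

/-- If a finite simple graph admits some orientation (each edge receiving at
least one direction) with in-degree at most `k`, then it admits an orientation
choosing exactly one direction for each edge with in-degree at most `2k`. -/
theorem stmt_9 {V : Type*} [Fintype V] (G : SimpleGraph V) (k : ℕ)
    (H₀ : V → V → Prop)
    (h0orient : ∀ u v, G.Adj u v → H₀ u v ∨ H₀ v u)
    (h0sub : ∀ u v, H₀ u v → G.Adj u v)
    (h0indeg : ∀ v, {u | H₀ u v}.ncard ≤ k) :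
    ∃ H : V → V → Prop,
      (∀ u v, G.Adj u v → (H u v ∧ ¬ H v u) ∨ (H v u ∧ ¬ H u v)) ∧
      (∀ u v, H u v → G.Adj u v) ∧
      (∀ v, {u | H u v}.ncard ≤ 2 * k) := by
  refine ⟨Relation.breakTies WellOrderingRel H₀, ?_, ?_, ?_⟩
  · exact fun u v hadj => Relation.xor_breakTies (h0orient u v hadj) hadj.ne
  · exact fun u v h => h0sub u v h.rel
  · intro v
    calc {u | Relation.breakTies WellOrderingRel H₀ u v}.ncard ≤ {u | H₀ u v}.ncard :=
        Relation.ncard_breakTies_le v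
      _ ≤ k := h0indeg v
      _ ≤ 2 * k := by omega
end
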